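/- For every n ∈ ℕ, every real t, and every function w : ℕ → ℝ, the identity ∑_{r=1}^n ∑_{s=1}^n r·C(r+s−1, r)·w_r·w_s·t^{r+s} = ∑_{k=1}^n k·(∑_{s=1}^n C(s,k)·w_s·t^s)² holds; in particular, the left-hand side is nonnegative. -/

import Mathlib

/-!
Since `k * C(r, k) = r * C(r - 1, k - 1)`, Vandermonde's identity gives
`r * C(r + s - 1, r) = ∑ₖ k * C(r, k) * C(s, k)`. The quadratic form on the left is therefore
`∑ₖ k * (∑ₛ C(s, k) * w s * t ^ s) ^ 2`, a sum of squares with nonnegative weights.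
-/

open Finset

namespace Nat

theorem sum_range_choose_mul_choose_add_one (m s : ℕ) :
    ∑ j ∈ range s, m.choose j * s.choose (j + 1) = (m + s).choose (m + 1) := by
  cases s with
  | zero => simp
  | succ s =>
    calc ∑ j ∈ range (s + 1), m.choose j * (s + 1).choose (j + 1)
        = ∑ j ∈ range (s + 1), m.choose j * (s + 1).choose (s - j) := by
          refine sum_congr rfl fun j hj => ?_
          have hj : j + 1 ≤ s + 1 := by simpa [Nat.lt_succ_iff] using hj
          rw [← choose_symm hj, show s + 1 - (j + 1) = s - j by omega]
      _ = (m + (s + 1)).choose s := by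
          rw [add_choose_eq, Nat.sum_antidiagonal_eq_sum_range_succ_mk]
      _ = (m + (s + 1)).choose (m + 1) := by
          rw [← choose_symm (by omega), show m + (s + 1) - s = m + 1 by omega]

theorem sum_Icc_mul_choose_mul_choose {n s : ℕ} (r : ℕ) (hs : s ≤ n) :
    ∑ k ∈ Icc 1 n, k * r.choose k * s.choose k = r * (r + s - 1).choose r := by
  cases r with
  | zero =>
    simp only [zero_mul]
    exact sum_eq_zero fun k hk => by
      rw [choose_eq_zero_of_lt (mem_Icc.mp hk).1, mul_zero, zero_mul]
  | succ m =>
    rw [← Ico_add_one_right_eq_Icc, sum_Ico_eq_sum_range, add_tsub_cancel_right]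
    calc ∑ j ∈ range n, (1 + j) * (m + 1).choose (1 + j) * s.choose (1 + j)
        = ∑ j ∈ range n, (m + 1) * (m.choose j * s.choose (j + 1)) := by
          refine sum_congr rfl fun j _ => ?_
          rw [add_comm 1 j, ← mul_assoc, add_one_mul_choose_eq, mul_comm (j + 1)]
      _ = (m + 1) * ∑ j ∈ range s, m.choose j * s.choose (j + 1) := by
          rw [← mul_sum, sum_subset (range_subset_range.mpr hs)]
          intro j _ hj
          rw [choose_eq_zero_of_lt (n := s) (by simp at hj; omega), mul_zero]
      _ = (m + 1) * (m + 1 + s - 1).choose (m + 1) := by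
          rw [sum_range_choose_mul_choose_add_one, add_right_comm, add_tsub_cancel_right]

end Nat

theorem Finset.sum_sum_sum_mul_mul_eq_sum_mul_sq {ι κ R : Type*} [CommSemiring R]
    (s : Finset ι) (t : Finset κ) (c : κ → R) (a : κ → ι → R) (x : ι → R) :
    ∑ i ∈ s, ∑ j ∈ s, (∑ k ∈ t, c k * a k i * a k j) * x i * x j
      = ∑ k ∈ t, c k * (∑ i ∈ s, a k i * x i) ^ 2 := by
  calc ∑ i ∈ s, ∑ j ∈ s, (∑ k ∈ t, c k * a k i * a k j) * x i * x j
      = ∑ i ∈ s, ∑ j ∈ s, ∑ k ∈ t, c k * ((a k i * x i) * (a k j * x j)) := by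
        simp only [sum_mul]
        exact sum_congr rfl fun i _ => sum_congr rfl fun j _ => sum_congr rfl fun k _ => by ring
    _ = ∑ k ∈ t, ∑ i ∈ s, ∑ j ∈ s, c k * ((a k i * x i) * (a k j * x j)) :=
        (sum_congr rfl fun i _ => sum_comm).trans sum_comm
    _ = ∑ k ∈ t, c k * (∑ i ∈ s, a k i * x i) ^ 2 := by
        simp only [sq, mul_sum, sum_mul]
        exact sum_congr rfl fun k _ => sum_congr rfl fun i _ => sum_congr rfl fun j _ => by ring

theorem stmt_11 (n : ℕ) (t : ℝ) (w : ℕ → ℝ) :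
    (∑ r ∈ Finset.Icc 1 n, ∑ s ∈ Finset.Icc 1 n,
        (r : ℝ) * (Nat.choose (r + s - 1) r : ℝ) * w r * w s * t ^ (r + s))
      = ∑ k ∈ Finset.Icc 1 n,
          (k : ℝ) * (∑ s ∈ Finset.Icc 1 n, (Nat.choose s k : ℝ) * w s * t ^ s) ^ 2 ∧
    0 ≤ ∑ r ∈ Finset.Icc 1 n, ∑ s ∈ Finset.Icc 1 n,
        (r : ℝ) * (Nat.choose (r + s - 1) r : ℝ) * w r * w s * t ^ (r + s) := by
  have kernel_eq : ∀ r : ℕ, ∀ s ∈ Icc 1 n, (r : ℝ) * ((r + s - 1).choose r : ℝ)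
      = ∑ k ∈ Icc 1 n, (k : ℝ) * (r.choose k : ℝ) * (s.choose k : ℝ) := fun r s hs => by
    exact_mod_cast (Nat.sum_Icc_mul_choose_mul_choose r (mem_Icc.mp hs).2).symm
  have sum_sq : (∑ r ∈ Icc 1 n, ∑ s ∈ Icc 1 n,
        (r : ℝ) * ((r + s - 1).choose r : ℝ) * w r * w s * t ^ (r + s))
      = ∑ k ∈ Icc 1 n, (k : ℝ) * (∑ s ∈ Icc 1 n, (s.choose k : ℝ) * w s * t ^ s) ^ 2 := by
    simp only [mul_assoc _ (w _) (t ^ _)]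
    rw [← sum_sum_sum_mul_mul_eq_sum_mul_sq (Icc 1 n) (Icc 1 n) (fun k : ℕ => (k : ℝ))
      (fun k s : ℕ => (s.choose k : ℝ)) (fun s => w s * t ^ s)]
    refine sum_congr rfl fun r _ => sum_congr rfl fun s hs => ?_
    rw [← kernel_eq r s hs, pow_add]
    ring
  exact ⟨sum_sq, sum_sq ▸ sum_nonneg fun k _ => by positivity⟩
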